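/- arXiv:0908.4482 — 2 statements merged into one kernel-verified Lean document; each statement's English description precedes it below -/
import Mathlib

section
/- Let $A = \mathbb{C}[x]$ be the polynomial Hopf algebra over $\mathbb{C}$, with $\Delta(x) = x \otimes 1 + 1 \otimes x$, $\varepsilon(x) = 0$ and $S(x) = -x$. Then $\tilde A = 0$: the only $w \in A^*$ with $\dim_{\mathbb{C}} (A^* * w * A^*) < \infty$ is $w = 0$. -/
open TensorProduct

noncomputable section

variable {K : Type} [Field K] {A : Type} [CommRing A] [HopfAlgebra K A]

/-- Convolution product on the dual of a coalgebra:
`(w * w') a = ∑ w a₍₁₎ * w' a₍₂₎`. -/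
def conv (w w' : Module.Dual K A) : Module.Dual K A :=
  (LinearMap.mul' K K).comp ((TensorProduct.map w w').comp (Coalgebra.comul (R := K)))

/-- Left convolution by `u`, as a linear endomorphism of the dual. -/
def convL (u : Module.Dual K A) : Module.Dual K A →ₗ[K] Module.Dual K A where
  toFun := conv u
  map_add' x y := by
    unfold conv
    rw [TensorProduct.map_add_right, LinearMap.add_comp, LinearMap.comp_add]
  map_smul' c x := by
    show (LinearMap.mul' K K).comp ((TensorProduct.map u (c • x)).comp (Coalgebra.comul (R := K))) =
      c • (LinearMap.mul' K K).comp ((TensorProduct.map u x).comp (Coalgebra.comul (R := K)))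
    rw [TensorProduct.map_smul_right, LinearMap.smul_comp, LinearMap.comp_smul]

/-- The span of `{u * w' : w' ∈ A*}`. -/
def rightOrbit (u : Module.Dual K A) : Submodule K (Module.Dual K A) :=
  Submodule.span K {x | ∃ w', x = conv u w'}

lemma rightOrbit_mapsTo (u : Module.Dual K A) :
    ∀ x ∈ rightOrbit u, convL u x ∈ rightOrbit u := by
  intro x hx
  have h : Submodule.map (convL u) (rightOrbit u) ≤ rightOrbit u := by
    rw [rightOrbit, Submodule.map_span]
    apply Submodule.span_mono
    rintro y ⟨x, ⟨w', rfl⟩, rfl⟩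
    exact ⟨conv u w', rfl⟩
  exact h ⟨x, hx, rfl⟩

/-- The trace of the finite-rank operator "left convolution by `u`", computed as the trace of
its restriction to the finite-dimensional invariant subspace `u * A*` containing its image. -/
def convTrace (u : Module.Dual K A) : K :=
  LinearMap.trace K (rightOrbit u) ((convL u).restrict (rightOrbit_mapsTo u))

/-- The span of `{w₁ * w * w₂ : w₁, w₂ ∈ A*}`. -/
def twoSidedOrbit (w : Module.Dual K A) : Submodule K (Module.Dual K A) :=
  Submodule.span K {x | ∃ w₁ w₂, x = conv w₁ (conv w w₂)}

/-- `Ã = {w ∈ A* : dim_K (A* * w * A*) < ∞}`. -/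
def tildeSet (K : Type) [Field K] (A : Type) [CommRing A] [HopfAlgebra K A] :
    Set (Module.Dual K A) :=
  {w | FiniteDimensional K (twoSidedOrbit w)}

/-- A normalized invariant integral on `G = Spec A`:  `w_G(1) = 1` and
`w * w_G = w(1) w_G = w_G * w` for all `w ∈ A*`. -/
def IsNormalizedIntegral (wG : Module.Dual K A) : Prop :=
  wG 1 = 1 ∧ ∀ w : Module.Dual K A, conv w wG = w 1 • wG ∧ conv wG w = w 1 • wG
end

/-!
If `w ≠ 0` and `m` is the least degree with `w(xᵐ) ≠ 0`, the functionals `Fₖ = xₖ^* * w`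
(where `xₖ^*` is the `k`-th coordinate functional) lie in `A* * w * A*`, since `w = w * ε`,
and `Fₖ(x^{m+j}) = (m+j choose k) w(x^{m+j-k})` vanishes for `j < k` and not for `j = k`.
This triangularity makes the `Fₖ` linearly independent, so `A* * w * A*` is infinite-dimensional.
-/

theorem linearIndependent_of_forall_lt_apply_eq_zero {ι R M : Type*} [LinearOrder ι]
    [WellFoundedLT ι] [CommRing R] [NoZeroDivisors R] [AddCommGroup M] [Module R M]
    (v : ι → M) (φ : ι → M →ₗ[R] R) (hlt : ∀ j k, j < k → φ j (v k) = 0)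
    (hdiag : ∀ k, φ k (v k) ≠ 0) : LinearIndependent R v := by
  rw [linearIndependent_iff']
  intro s g hsum i
  induction i using WellFoundedLT.induction with
  | ind i ih =>
    intro hi
    have hφ : ∑ j ∈ s, g j * φ i (v j) = 0 := by
      simpa only [map_sum, map_smul, smul_eq_mul, map_zero] using congrArg (φ i) hsum
    rw [Finset.sum_eq_single_of_mem i hi] at hφ
    · exact (mul_eq_zero.mp hφ).resolve_right (hdiag i)
    · intro j hj hji
      rcases hji.lt_or_gt with hji | hij
      · rw [ih j hji hj, zero_mul]
      · rw [hlt i j hij, mul_zero]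

section Convolution

variable {K : Type} [Field K] {A : Type} [CommRing A] [HopfAlgebra K A]

theorem conv_zero_left (w : Module.Dual K A) : conv 0 w = 0 := by
  rw [conv, TensorProduct.map_zero_left, LinearMap.zero_comp, LinearMap.comp_zero]

theorem conv_zero_right (w : Module.Dual K A) : conv w 0 = 0 := by
  rw [conv, TensorProduct.map_zero_right, LinearMap.zero_comp, LinearMap.comp_zero]

theorem conv_counit (w : Module.Dual K A) : conv w (Coalgebra.counit (R := K)) = w := by
  ext a
  rw [conv, LinearMap.comp_apply, LinearMap.comp_apply, ← LinearMap.rTensor_comp_lTensor,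
    LinearMap.comp_apply, Coalgebra.lTensor_counit_comul, LinearMap.rTensor_tmul,
    LinearMap.mul'_apply, mul_one]

theorem twoSidedOrbit_zero : twoSidedOrbit (0 : Module.Dual K A) = ⊥ := by
  rw [eq_bot_iff, twoSidedOrbit, Submodule.span_le]
  rintro x ⟨w₁, w₂, rfl⟩
  rw [conv_zero_left, conv_zero_right]
  exact Submodule.zero_mem ⊥

theorem conv_mem_twoSidedOrbit (u w : Module.Dual K A) : conv u w ∈ twoSidedOrbit w :=
  Submodule.subset_span ⟨u, Coalgebra.counit, by rw [conv_counit]⟩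

theorem not_finiteDimensional_twoSidedOrbit {ι : Type} [Infinite ι] {u : ι → Module.Dual K A}
    {w : Module.Dual K A} (hu : LinearIndependent K fun k => conv (u k) w) :
    ¬ FiniteDimensional K (twoSidedOrbit w) := by
  intro hfin
  let F : ι → twoSidedOrbit w := fun k => ⟨conv (u k) w, conv_mem_twoSidedOrbit (u k) w⟩
  exact Module.Finite.not_linearIndependent_of_infinite F
    (LinearIndependent.of_comp (twoSidedOrbit w).subtype hu)

end Convolution

section PolynomialHopfAlgebra

variable {K : Type} [Field K] {A : Type} [CommRing A] [HopfAlgebra K A] {b : Module.Basis ℕ K A}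

theorem basis_eq_pow (hone : b 0 = 1) (hmul : ∀ m n : ℕ, b m * b n = b (m + n)) (n : ℕ) :
    b n = b 1 ^ n := by
  induction n with
  | zero => rw [hone, pow_zero]
  | succ n ih => rw [pow_succ, ← ih, hmul]

theorem comul_basis (hpow : ∀ n, b n = b 1 ^ n)
    (hcomul : Coalgebra.comul (R := K) (b 1) = b 1 ⊗ₜ[K] (1 : A) + (1 : A) ⊗ₜ[K] b 1) (n : ℕ) :
    Coalgebra.comul (R := K) (b n) =
      ∑ k ∈ Finset.range (n + 1), n.choose k • (b k ⊗ₜ[K] b (n - k)) := by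
  rw [hpow n, Bialgebra.comul_pow, hcomul, add_pow]
  refine Finset.sum_congr rfl fun k _ => ?_
  rw [Algebra.TensorProduct.tmul_pow, Algebra.TensorProduct.tmul_pow,
    Algebra.TensorProduct.tmul_mul_tmul, one_pow, one_pow, one_mul, mul_one,
    ← hpow, ← hpow, nsmul_eq_mul, mul_comm]

theorem conv_coord_apply_basis (hpow : ∀ n, b n = b 1 ^ n)
    (hcomul : Coalgebra.comul (R := K) (b 1) = b 1 ⊗ₜ[K] (1 : A) + (1 : A) ⊗ₜ[K] b 1)
    (w : Module.Dual K A) (k n : ℕ) :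
    conv (b.coord k) w (b n) = n.choose k * w (b (n - k)) := by
  have hsum : conv (b.coord k) w (b n) = ∑ j ∈ Finset.range (n + 1),
      (n.choose j : K) * (b.coord k (b j) * w (b (n - j))) := by
    rw [conv, LinearMap.comp_apply, LinearMap.comp_apply, comul_basis hpow hcomul, map_sum,
      map_sum]
    refine Finset.sum_congr rfl fun j _ => ?_
    rw [map_nsmul, map_nsmul, TensorProduct.map_tmul, LinearMap.mul'_apply, nsmul_eq_mul]
  rw [hsum, Finset.sum_eq_single k]
  · rw [Module.Basis.coord_apply, Module.Basis.repr_self, Finsupp.single_eq_same, one_mul]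
  · intro j _ hjk
    rw [Module.Basis.coord_apply, Module.Basis.repr_self, Finsupp.single_eq_of_ne hjk.symm,
      zero_mul, mul_zero]
  · intro hk
    rw [Nat.choose_eq_zero_of_lt (by simpa [Nat.lt_succ_iff] using hk), Nat.cast_zero, zero_mul]

theorem linearIndependent_conv_coord [CharZero K] (hpow : ∀ n, b n = b 1 ^ n)
    (hcomul : Coalgebra.comul (R := K) (b 1) = b 1 ⊗ₜ[K] (1 : A) + (1 : A) ⊗ₜ[K] b 1)
    {w : Module.Dual K A} (hw : w ≠ 0) :
    LinearIndependent K fun k => conv (b.coord k) w := by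
  classical
  have hex : ∃ n, w (b n) ≠ 0 := by
    by_contra! h
    exact hw (b.ext h)
  let m := Nat.find hex
  refine linearIndependent_of_forall_lt_apply_eq_zero _
    (fun j => Module.Dual.eval K A (b (m + j))) (fun j k hjk => ?_) (fun k => ?_)
  · rw [Module.Dual.eval_apply, conv_coord_apply_basis hpow hcomul]
    rcases le_or_gt k (m + j) with hk | hk
    · rw [not_not.mp (Nat.find_min hex (show m + j - k < m by omega)), mul_zero]
    · rw [Nat.choose_eq_zero_of_lt hk, Nat.cast_zero, zero_mul]
  · rw [Module.Dual.eval_apply, conv_coord_apply_basis hpow hcomul, Nat.add_sub_cancel]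
    exact mul_ne_zero (Nat.cast_ne_zero.mpr (Nat.choose_pos (Nat.le_add_left k m)).ne')
      (Nat.find_spec hex)

end PolynomialHopfAlgebra

theorem polynomial_tilde_eq_zero_general (A : Type) [CommRing A] [HopfAlgebra ℂ A]
    (b : Module.Basis ℕ ℂ A)
    (hone : b 0 = 1)
    (hmul : ∀ m n : ℕ, b m * b n = b (m + n))
    (hcomul : Coalgebra.comul (R := ℂ) (b 1) = b 1 ⊗ₜ[ℂ] (1 : A) + (1 : A) ⊗ₜ[ℂ] b 1) :
    tildeSet ℂ A = {0} := by
  have hpow := basis_eq_pow hone hmul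
  ext w
  refine ⟨fun hfin => ?_, ?_⟩
  · by_contra hw
    exact not_finiteDimensional_twoSidedOrbit (linearIndependent_conv_coord hpow hcomul hw) hfin
  · rintro rfl
    change FiniteDimensional ℂ (twoSidedOrbit (0 : Module.Dual ℂ A))
    rw [twoSidedOrbit_zero]
    infer_instance

/-- Let `A = ℂ[x]` be the polynomial Hopf algebra over `ℂ`, i.e. a commutative Hopf
`ℂ`-algebra with basis `(xⁿ)_{n ∈ ℕ}` satisfying `xᵐ xⁿ = xᵐ⁺ⁿ`, `x⁰ = 1`,
`Δ(x) = x ⊗ 1 + 1 ⊗ x`, `ε(x) = 0` and `S(x) = -x`. Then `Ã = 0`: the only `w ∈ A*` with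
`dim_ℂ (A* * w * A*) < ∞` is `w = 0`. -/
theorem polynomial_tilde_eq_zero (A : Type) [CommRing A] [HopfAlgebra ℂ A]
    (b : Module.Basis ℕ ℂ A)
    (hone : b 0 = 1)
    (hmul : ∀ m n : ℕ, b m * b n = b (m + n))
    (hcomul : Coalgebra.comul (R := ℂ) (b 1) = b 1 ⊗ₜ[ℂ] (1 : A) + (1 : A) ⊗ₜ[ℂ] b 1)
    (hcounit : Coalgebra.counit (R := ℂ) (b 1) = 0)
    (hantipode : HopfAlgebra.antipode (R := ℂ) (b 1) = - b 1) :
    tildeSet ℂ A = {0} :=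
  polynomial_tilde_eq_zero_general A b hone hmul hcomul
end

section
/- Suppose $\tilde A$ is dense in $A^*$. Then every two-sided ideal $I$ of the (possibly non-unital) $K$-algebra $\tilde A$ (a $K$-subspace $I \subseteq \tilde A$ with $\tilde A * I \subseteq I$ and $I * \tilde A \subseteq I$) is a left and right $A^*$-submodule of $A^*$: $w * x \in I$ and $x * w \in I$ for all $w \in A^*$ and $x \in I$. -/
/-! For `x ∈ I` the functionals `u * x` are `u ∘ (x ⇀ ·)`, so the span of `{u * x : u ∈ Ã}`
is the image of `span Ã` under the transpose of `a ↦ x ⇀ a`; it lies in `I` and, inside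
`A* * x * A*`, is finite-dimensional, hence weakly closed. Density of `Ã` then puts the image
of all of `A*`, i.e. every `w * x`, into that span. The same argument with `a ↼ x` handles
`x * w`. -/

open TensorProduct

noncomputable section

variable {K : Type} [Field K] {A : Type} [CommRing A] [HopfAlgebra K A]

/-- `Ã` is dense in `A*` (for the weak linear topology): the only `a ∈ A` annihilated by all
of `Ã` is `0`. -/
def TildeDense (K : Type) [Field K] (A : Type) [CommRing A] [HopfAlgebra K A] : Prop :=
  ∀ a : A, (∀ u ∈ tildeSet K A, u a = 0) → a = 0

section Separation

open Module

variable {K U V : Type*} [Field K] [AddCommGroup U] [Module K U] [AddCommGroup V] [Module K V]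

/-- Finite-dimensional subspaces of a dual space are weakly closed. -/
theorem dualMap_mem_span_image_of_separating {S : Set (Dual K V)}
    (hS : ∀ a : V, (∀ u ∈ S, u a = 0) → a = 0) (ψ : U →ₗ[K] V)
    [FiniteDimensional K (Submodule.span K (ψ.dualMap '' S))] (w : Dual K V) :
    ψ.dualMap w ∈ Submodule.span K (ψ.dualMap '' S) := by
  rw [← Subspace.dualCoannihilator_dualAnnihilator_eq (W := Submodule.span K (ψ.dualMap '' S)),
    Submodule.mem_dualAnnihilator]
  intro a ha
  rw [Submodule.mem_dualCoannihilator] at ha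
  have hψa : ψ a = 0 := hS _ fun u hu => ha _ (Submodule.subset_span ⟨u, hu, rfl⟩)
  rw [LinearMap.dualMap_apply, hψa, map_zero]

end Separation

section Hit

variable {R C : Type*} [CommSemiring R] [AddCommMonoid C] [Module R C]

/-- `leftHit x a = ∑ a₍₁₎ x(a₍₂₎)`, the hit action `x ⇀ a` of the dual on the coalgebra. -/
def leftHit [CoalgebraStruct R C] (x : Module.Dual R C) : C →ₗ[R] C :=
  (TensorProduct.rid R C).toLinearMap ∘ₗ x.lTensor C ∘ₗ Coalgebra.comul

/-- `rightHit x a = ∑ x(a₍₁₎) a₍₂₎`, the hit action `a ↼ x` of the dual on the coalgebra. -/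
def rightHit [CoalgebraStruct R C] (x : Module.Dual R C) : C →ₗ[R] C :=
  (TensorProduct.lid R C).toLinearMap ∘ₗ x.rTensor C ∘ₗ Coalgebra.comul

@[simp]
theorem leftHit_counit [Coalgebra R C] : leftHit (Coalgebra.counit : Module.Dual R C) = .id := by
  ext a
  simp [leftHit, Coalgebra.lTensor_counit_comul]

@[simp]
theorem rightHit_counit [Coalgebra R C] : rightHit (Coalgebra.counit : Module.Dual R C) = .id := by
  ext a
  simp [rightHit, Coalgebra.rTensor_counit_comul]

end Hit

theorem conv_eq_dualMap_leftHit (u x : Module.Dual K A) : conv u x = (leftHit x).dualMap u := by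
  ext a
  change LinearMap.mul' K K (TensorProduct.map u x (Coalgebra.comul a)) =
    u (TensorProduct.rid K A (x.lTensor A (Coalgebra.comul a)))
  induction Coalgebra.comul (R := K) a using TensorProduct.induction_on with
  | zero => simp
  | tmul p q => simp [mul_comm]
  | add s t hs ht => simp [hs, ht]

theorem conv_eq_dualMap_rightHit (x u : Module.Dual K A) : conv x u = (rightHit x).dualMap u := by
  ext a
  change LinearMap.mul' K K (TensorProduct.map x u (Coalgebra.comul a)) =
    u (TensorProduct.lid K A (x.rTensor A (Coalgebra.comul a)))
  induction Coalgebra.comul (R := K) a using TensorProduct.induction_on with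
  | zero => simp
  | tmul p q => simp
  | add s t hs ht => simp [hs, ht]

theorem conv_counit_right (x : Module.Dual K A) : conv x Coalgebra.counit = x := by
  rw [conv_eq_dualMap_leftHit, leftHit_counit, LinearMap.dualMap_id, LinearMap.id_apply]

theorem conv_counit_left (x : Module.Dual K A) : conv Coalgebra.counit x = x := by
  rw [conv_eq_dualMap_rightHit, rightHit_counit, LinearMap.dualMap_id, LinearMap.id_apply]

theorem conv_mem_twoSidedOrbit_left (u x : Module.Dual K A) : conv u x ∈ twoSidedOrbit x :=
  Submodule.subset_span ⟨u, Coalgebra.counit, by rw [conv_counit_right]⟩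

theorem conv_mem_twoSidedOrbit_right (x u : Module.Dual K A) : conv x u ∈ twoSidedOrbit x :=
  Submodule.subset_span ⟨Coalgebra.counit, u, by rw [conv_counit_left]⟩

theorem conv_mem_span_conv_left_of_tildeDense (hdense : TildeDense K A) {x : Module.Dual K A}
    (hx : x ∈ tildeSet K A) (w : Module.Dual K A) :
    conv w x ∈ Submodule.span K ((conv · x) '' tildeSet K A) := by
  have hconv : (conv · x) = (leftHit x).dualMap := funext fun u => conv_eq_dualMap_leftHit u x
  have : FiniteDimensional K (twoSidedOrbit x) := hx
  have hle : Submodule.span K ((conv · x) '' tildeSet K A) ≤ twoSidedOrbit x :=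
    Submodule.span_le.2 <| Set.image_subset_iff.2 fun u _ => conv_mem_twoSidedOrbit_left u x
  rw [hconv] at hle ⊢
  have := Submodule.finiteDimensional_of_le hle
  rw [conv_eq_dualMap_leftHit]
  exact dualMap_mem_span_image_of_separating hdense _ w

theorem conv_mem_span_conv_right_of_tildeDense (hdense : TildeDense K A) {x : Module.Dual K A}
    (hx : x ∈ tildeSet K A) (w : Module.Dual K A) :
    conv x w ∈ Submodule.span K ((conv x ·) '' tildeSet K A) := by
  have hconv : (conv x ·) = (rightHit x).dualMap := funext (conv_eq_dualMap_rightHit x)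
  have : FiniteDimensional K (twoSidedOrbit x) := hx
  have hle : Submodule.span K ((conv x ·) '' tildeSet K A) ≤ twoSidedOrbit x :=
    Submodule.span_le.2 <| Set.image_subset_iff.2 fun u _ => conv_mem_twoSidedOrbit_right x u
  rw [hconv] at hle ⊢
  have := Submodule.finiteDimensional_of_le hle
  rw [conv_eq_dualMap_rightHit]
  exact dualMap_mem_span_image_of_separating hdense _ w

/-- If `Ã` is dense in `A*`, then every two-sided ideal `I` of the (possibly non-unital)
algebra `Ã` (a linear subspace of `A*` contained in `Ã` with `Ã * I ⊆ I` and `I * Ã ⊆ I`)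
is a left and right `A*`-submodule of `A*`. -/
theorem ideal_of_tilde_is_dual_submodule (hdense : TildeDense K A)
    (I : Submodule K (Module.Dual K A)) (hIle : (I : Set (Module.Dual K A)) ⊆ tildeSet K A)
    (hleft : ∀ u ∈ tildeSet K A, ∀ x ∈ I, conv u x ∈ I)
    (hright : ∀ u ∈ tildeSet K A, ∀ x ∈ I, conv x u ∈ I) :
    ∀ (w : Module.Dual K A), ∀ x ∈ I, conv w x ∈ I ∧ conv x w ∈ I := by
  intro w x hx
  have hxt : x ∈ tildeSet K A := hIle hx
  have hspan_left : Submodule.span K ((conv · x) '' tildeSet K A) ≤ I :=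
    Submodule.span_le.2 <| Set.image_subset_iff.2 fun u hu => hleft u hu x hx
  have hspan_right : Submodule.span K ((conv x ·) '' tildeSet K A) ≤ I :=
    Submodule.span_le.2 <| Set.image_subset_iff.2 fun u hu => hright u hu x hx
  exact ⟨hspan_left (conv_mem_span_conv_left_of_tildeDense hdense hxt w),
    hspan_right (conv_mem_span_conv_right_of_tildeDense hdense hxt w)⟩

end
end
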